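/- Let T_0 and T_1 be independent standard Gaussian real random variables, let θ ∈ ℝ, and let σ(t) = 1/(1 + e^{−t}) be the logistic sigmoid. Then the probability that T_1 + log σ(θ) > T_0 + log(1 − σ(θ)) equals Φ(θ/√2), where Φ is the cumulative distribution function of the standard normal distribution. Consequently, for every p ∈ (0,1) there exists θ ∈ ℝ (namely θ = √2 · Φ^{-1}(p)) such that this arg-max mechanism outputs the value 1 with probability exactly p. -/

import Mathlib

/-!
Since `log σ(θ) - log (1 - σ(θ)) = θ`, the mechanism outputs `1` exactly when `T₀ - T₁ < θ`.
The difference of two independent standard Gaussians is `N(0, 2)`, i.e. `√2` times a standard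
Gaussian, so this event has probability `Φ(θ / √2)`. As `Φ` is continuous (the Gaussian has no
atoms) with limits `0` and `1`, it takes every value in `(0, 1)`.
-/

open MeasureTheory ProbabilityTheory

noncomputable def logisticSigmoid (t : ℝ) : ℝ := 1 / (1 + Real.exp (-t))

open Set NNReal

lemma log_logisticSigmoid_sub_log_one_sub (t : ℝ) :
    Real.log (logisticSigmoid t) - Real.log (1 - logisticSigmoid t) = t := by
  have hpos : 0 < 1 + Real.exp (-t) := by positivity
  have hcompl : 1 - logisticSigmoid t = Real.exp (-t) / (1 + Real.exp (-t)) := by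
    rw [logisticSigmoid]; field_simp; ring
  rw [hcompl, logisticSigmoid, Real.log_div one_ne_zero hpos.ne',
    Real.log_div (Real.exp_ne_zero _) hpos.ne', Real.log_one, Real.log_exp]
  ring

namespace ProbabilityTheory

lemma gaussianReal_prod_map_sub {m₁ m₂ : ℝ} {v₁ v₂ : ℝ≥0} :
    ((gaussianReal m₁ v₁).prod (gaussianReal m₂ v₂)).map (fun p ↦ p.1 - p.2)
      = gaussianReal (m₁ - m₂) (v₁ + v₂) := by
  have hindep := indepFun_prod (μ := gaussianReal m₁ v₁) (ν := gaussianReal m₂ v₂)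
    measurable_id measurable_neg
  have hfst : ((gaussianReal m₁ v₁).prod (gaussianReal m₂ v₂)).map (fun p ↦ p.1)
      = gaussianReal m₁ v₁ := measurePreserving_fst.map_eq
  have hsnd : ((gaussianReal m₁ v₁).prod (gaussianReal m₂ v₂)).map (fun p ↦ -p.2)
      = gaussianReal (-m₂) v₂ := by
    change Measure.map (Neg.neg ∘ Prod.snd) _ = _
    rw [← Measure.map_map measurable_neg measurable_snd, measurePreserving_snd.map_eq,
      gaussianReal_map_neg]
  rw [sub_eq_add_neg m₁]
  convert gaussianReal_add_gaussianReal_of_indepFun hindep hfst hsnd using 2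
  exact funext fun p ↦ sub_eq_add_neg _ _

lemma gaussianReal_zero_one_map_affine (μ : ℝ) (v : ℝ≥0) :
    (gaussianReal 0 1).map (fun z ↦ μ + √v * z) = gaussianReal μ v := by
  change Measure.map ((μ + ·) ∘ (√v * ·)) _ = _
  rw [← Measure.map_map (measurable_const_add μ) (measurable_const_mul _),
    gaussianReal_map_const_mul, gaussianReal_map_const_add]
  congr 1
  · ring
  · ext; simp

lemma gaussianReal_Iic {μ : ℝ} {v : ℝ≥0} (hv : v ≠ 0) (x : ℝ) :
    gaussianReal μ v (Iic x) = gaussianReal 0 1 (Iic ((x - μ) / √v)) := by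
  have hsqrt : 0 < √(v : ℝ) := Real.sqrt_pos.2 (NNReal.coe_pos.2 (pos_iff_ne_zero.2 hv))
  rw [← gaussianReal_zero_one_map_affine, Measure.map_apply (by fun_prop) measurableSet_Iic]
  congr 1
  ext z
  simp only [mem_preimage, mem_Iic, le_div_iff₀ hsqrt]
  constructor <;> intro h <;> linarith

lemma continuous_cdf (μ : Measure ℝ) [IsProbabilityMeasure μ] [NullSingletonClass μ] :
    Continuous (cdf μ) := by
  refine continuous_iff_continuousAt.2 fun x ↦ ?_
  have hmono := monotone_cdf μ
  rw [hmono.continuousAt_iff_leftLim_eq_rightLim, (cdf μ).rightLim_eq]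
  have hjump : ENNReal.ofReal (cdf μ x - Function.leftLim (cdf μ) x) = 0 := by
    rw [← StieltjesFunction.measure_singleton, measure_cdf, measure_singleton]
  linarith [hmono.leftLim_le le_rfl (x := x), ENNReal.ofReal_eq_zero.1 hjump]

lemma exists_cdf_eq (μ : Measure ℝ) [IsProbabilityMeasure μ] [NullSingletonClass μ] {p : ℝ}
    (hp : p ∈ Ioo 0 1) : ∃ x, cdf μ x = p :=
  mem_range_of_exists_le_of_exists_ge (continuous_cdf μ)
    ((tendsto_cdf_atBot μ).eventually (ge_mem_nhds hp.1)).exists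
    ((tendsto_cdf_atTop μ).eventually (le_mem_nhds hp.2)).exists

end ProbabilityTheory

lemma argmax_event_eq_preimage_sub (θ : ℝ) :
    {p : ℝ × ℝ | p.1 + Real.log (1 - logisticSigmoid θ) < p.2 + Real.log (logisticSigmoid θ)}
      = (fun p ↦ p.1 - p.2) ⁻¹' Iio θ := by
  ext p
  have hlogit := log_logisticSigmoid_sub_log_one_sub θ
  simp only [mem_ofPred_eq, mem_preimage, mem_Iio]
  constructor <;> intro h <;> linarith

lemma gaussianReal_prod_argmax_event_eq_cdf (θ : ℝ) :
    ((gaussianReal 0 1).prod (gaussianReal 0 1))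
        {p : ℝ × ℝ |
          p.1 + Real.log (1 - logisticSigmoid θ) < p.2 + Real.log (logisticSigmoid θ)}
      = ENNReal.ofReal (cdf (gaussianReal 0 1) (θ / √2)) := by
  have := nullSingletonClass_gaussianReal (μ := 0) (v := 2) two_ne_zero
  rw [argmax_event_eq_preimage_sub, ← Measure.map_apply (by fun_prop) measurableSet_Iio,
    gaussianReal_prod_map_sub, sub_zero, one_add_one_eq_two, measure_congr Iio_ae_eq_Iic,
    gaussianReal_Iic two_ne_zero, sub_zero, NNReal.coe_ofNat, ofReal_cdf]

/-- **Output distribution of the NCM arg-max mechanism (Eq. (3)).**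
If `T₀, T₁` are independent standard Gaussians, then
`P(T₁ + log σ(θ) > T₀ + log (1 - σ(θ))) = Φ(θ/√2)`, where `Φ` is the standard
normal cdf; consequently every Bernoulli output probability `p ∈ (0,1)` is
realized by some logit `θ`. -/
theorem ncm_argmax_output_distribution (θ : ℝ) :
    ((gaussianReal 0 1).prod (gaussianReal 0 1))
        {p : ℝ × ℝ |
          p.1 + Real.log (1 - logisticSigmoid θ) < p.2 + Real.log (logisticSigmoid θ)}
      = ENNReal.ofReal (cdf (gaussianReal 0 1) (θ / Real.sqrt 2)) ∧
    ∀ p ∈ Set.Ioo (0 : ℝ) 1, ∃ θ' : ℝ,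
      ((gaussianReal 0 1).prod (gaussianReal 0 1))
          {q : ℝ × ℝ |
            q.1 + Real.log (1 - logisticSigmoid θ') < q.2 + Real.log (logisticSigmoid θ')}
        = ENNReal.ofReal p := by
  have := nullSingletonClass_gaussianReal (μ := 0) (v := 1) one_ne_zero
  refine ⟨gaussianReal_prod_argmax_event_eq_cdf θ, fun p hp ↦ ?_⟩
  obtain ⟨x, hx⟩ := exists_cdf_eq (gaussianReal 0 1) hp
  refine ⟨√2 * x, ?_⟩
  rw [gaussianReal_prod_argmax_event_eq_cdf, mul_div_cancel_left₀ x (by positivity), hx]
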